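/- arXiv:1611.03581 — 3 statements merged into one kernel-verified Lean document; each statement's English description precedes it below -/
import Mathlib

section
/- Let T > 0, 0 < ν₀ ≤ ν₁, η, ν ∈ [ν₀, ν₁], p ≥ 1, and h ∈ [0,1]. There exists a constant C = C(ν₀, ν₁, T, p) such that for every 0 < t ≤ T, ∫₀ᵗ s^{η-1}(t-s)^{ν-1}(|s^h - 1|^p + |(t-s)^h - 1|^p) ds ≤ C·h·t^{η+ν-1}(1 + |ln t|^p). -/
/-!
For `h ∈ [0, 1]` and `0 < s ≤ T`, writing `s^h = exp (h ln s)` gives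
`|s^h - 1| ≤ h |ln s| max(1, T)`; together with `|s^h - 1| ≤ max(1, T)` this yields
`|s^h - 1|^p ≤ h max(1, T)^p |ln s|`. The bound `|ln s| ≤ |ln t| + (t/s)^ε / ε` with `ε = ν₀/2`
trades the logarithmic singularity at `s = 0` for a loss of `ε` in the exponent of `s`. What
remains are integrals `∫₀ᵗ s^(a-1) (t-s)^(b-1) ds = t^(a+b-1) B(a, b)` with `a, b ≥ ε`, and
`B(a, b) ≤ B(ε, ε)` there.
-/

open MeasureTheory intervalIntegral Set

theorem intervalIntegrable_rpow_mul_rpow_sub {a b t : ℝ} (ha : 0 < a) (hb : 0 < b) (ht : 0 < t) :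
    IntervalIntegrable (fun s => s ^ (a - 1) * (t - s) ^ (b - 1)) volume 0 t := by
  have hleft : IntervalIntegrable (fun s : ℝ => s ^ (a - 1)) volume 0 (t / 2) :=
    intervalIntegrable_rpow' (by linarith)
  have hright : IntervalIntegrable (fun s : ℝ => (t - s) ^ (b - 1)) volume (t / 2) t := by
    have hsub := (intervalIntegrable_rpow' (r := b - 1) (a := 0) (b := t / 2)
      (by linarith)).comp_sub_left t
    rw [sub_zero, show t - t / 2 = t / 2 by ring] at hsub
    exact hsub.symm
  refine (hleft.mul_continuousOn ?_).trans (hright.continuousOn_mul ?_)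
  · refine ContinuousOn.rpow_const (by fun_prop) fun s hs => Or.inl ?_
    rw [uIcc_of_le (by linarith)] at hs
    linarith [hs.2]
  · refine ContinuousOn.rpow_const (by fun_prop) fun s hs => Or.inl ?_
    rw [uIcc_of_le (by linarith)] at hs
    linarith [hs.1]

theorem integral_rpow_mul_rpow_sub {a b t : ℝ} (ht : 0 < t) :
    ∫ s in (0 : ℝ)..t, s ^ (a - 1) * (t - s) ^ (b - 1)
      = t ^ (a + b - 1) * ∫ θ in (0 : ℝ)..1, θ ^ (a - 1) * (1 - θ) ^ (b - 1) := by
  have hscale := integral_comp_mul_left (a := 0) (b := 1)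
    (fun s : ℝ => s ^ (a - 1) * (t - s) ^ (b - 1)) ht.ne'
  rw [mul_zero, mul_one, smul_eq_mul] at hscale
  have hhom : ∫ θ in (0 : ℝ)..1, (t * θ) ^ (a - 1) * (t - t * θ) ^ (b - 1)
      = t ^ (a + b - 2) * ∫ θ in (0 : ℝ)..1, θ ^ (a - 1) * (1 - θ) ^ (b - 1) := by
    rw [← intervalIntegral.integral_const_mul]
    refine integral_congr fun θ hθ => ?_
    rw [uIcc_of_le zero_le_one] at hθ
    rw [show t - t * θ = t * (1 - θ) by ring, Real.mul_rpow ht.le hθ.1,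
      Real.mul_rpow ht.le (by linarith [hθ.2]), show a + b - 2 = (a - 1) + (b - 1) by ring,
      Real.rpow_add ht]
    ring
  rw [hhom] at hscale
  rw [← (eq_inv_mul_iff_mul_eq₀ ht.ne').mp hscale, ← mul_assoc,
    show a + b - 1 = 1 + (a + b - 2) by ring, Real.rpow_add ht, Real.rpow_one]

theorem integral_rpow_mul_one_sub_rpow_le {a b c : ℝ} (hc : 0 < c) (ha : c ≤ a) (hb : c ≤ b) :
    ∫ θ in (0 : ℝ)..1, θ ^ (a - 1) * (1 - θ) ^ (b - 1)
      ≤ ∫ θ in (0 : ℝ)..1, θ ^ (c - 1) * (1 - θ) ^ (c - 1) := by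
  refine integral_mono_on_of_le_Ioo zero_le_one
    (intervalIntegrable_rpow_mul_rpow_sub (hc.trans_le ha) (hc.trans_le hb) one_pos)
    (intervalIntegrable_rpow_mul_rpow_sub hc hc one_pos) fun θ hθ => ?_
  have h1θ : 0 < 1 - θ := by linarith [hθ.2]
  exact mul_le_mul (Real.rpow_le_rpow_of_exponent_ge hθ.1 hθ.2.le (by linarith))
    (Real.rpow_le_rpow_of_exponent_ge h1θ (by linarith [hθ.1]) (by linarith))
    (Real.rpow_nonneg h1θ.le _) (Real.rpow_nonneg hθ.1.le _)

theorem integral_rpow_mul_rpow_sub_le {a b c t : ℝ} (hc : 0 < c) (ha : c ≤ a) (hb : c ≤ b)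
    (ht : 0 < t) :
    ∫ s in (0 : ℝ)..t, s ^ (a - 1) * (t - s) ^ (b - 1)
      ≤ t ^ (a + b - 1) * ∫ θ in (0 : ℝ)..1, θ ^ (c - 1) * (1 - θ) ^ (c - 1) := by
  rw [integral_rpow_mul_rpow_sub ht]
  gcongr
  exact integral_rpow_mul_one_sub_rpow_le hc ha hb

theorem abs_exp_sub_one_le_mul_max (x : ℝ) : |Real.exp x - 1| ≤ |x| * max 1 (Real.exp x) := by
  rcases le_total x 0 with hx | hx
  · rw [abs_of_nonpos (by simpa using hx), abs_of_nonpos hx]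
    nlinarith [Real.add_one_le_exp x, le_max_left 1 (Real.exp x)]
  · have hinv : Real.exp x * Real.exp (-x) = 1 := by
      rw [← Real.exp_add, add_neg_cancel, Real.exp_zero]
    have htangent : Real.exp x * (1 - x) ≤ 1 := by
      nlinarith [Real.add_one_le_exp (-x), Real.exp_pos x]
    rw [abs_of_nonneg (by simpa using hx), abs_of_nonneg hx]
    nlinarith [le_max_right 1 (Real.exp x)]

theorem rpow_le_max_one {u h : ℝ} (hu : 0 ≤ u) (h0 : 0 ≤ h) (h1 : h ≤ 1) :
    u ^ h ≤ max 1 u := by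
  rcases le_total u 1 with hu1 | hu1
  · exact (Real.rpow_le_one hu hu1 h0).trans (le_max_left _ _)
  · exact (Real.rpow_le_rpow_of_exponent_le hu1 h1).trans (by simp)

theorem abs_rpow_sub_one_le_mul {u h : ℝ} (hu : 0 < u) (h0 : 0 ≤ h) (h1 : h ≤ 1) :
    |u ^ h - 1| ≤ h * |Real.log u| * max 1 u := by
  calc |u ^ h - 1| ≤ |h * Real.log u| * max 1 (u ^ h) := by
        simpa [Real.rpow_def_of_pos hu, mul_comm h] using
          abs_exp_sub_one_le_mul_max (h * Real.log u)
    _ ≤ h * |Real.log u| * max 1 u := by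
        rw [abs_mul, abs_of_nonneg h0]
        exact mul_le_mul_of_nonneg_left (max_le (le_max_left _ _) (rpow_le_max_one hu.le h0 h1))
          (by positivity)

theorem rpow_le_mul_rpow_of_le_mul {x M c p : ℝ} (hx : 0 ≤ x) (hxM : x ≤ M)
    (hxc : x ≤ c * M) (hp : 1 ≤ p) : x ^ p ≤ c * M ^ p := by
  have hsplit : ∀ y : ℝ, 0 ≤ y → y ^ p = y ^ (p - 1) * y := fun y hy => by
    rw [← Real.rpow_add_one' hy (by linarith), sub_add_cancel]
  rw [hsplit x hx, hsplit M (hx.trans hxM)]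
  calc x ^ (p - 1) * x ≤ M ^ (p - 1) * (c * M) := by
        gcongr
        exact Real.rpow_nonneg (hx.trans hxM) _
    _ = c * (M ^ (p - 1) * M) := by ring

theorem abs_log_le_abs_log_add_rpow_div {u t ε : ℝ} (hu : 0 < u) (hut : u ≤ t) (hε : 0 < ε) :
    |Real.log u| ≤ |Real.log t| + (t / u) ^ ε / ε := by
  have hlog : Real.log u = Real.log t - Real.log (t / u) := by
    rw [Real.log_div (by linarith) hu.ne']; ring
  have hratio : 0 ≤ Real.log (t / u) := Real.log_nonneg ((one_le_div hu).mpr hut)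
  rw [hlog]
  calc |Real.log t - Real.log (t / u)| ≤ |Real.log t| + Real.log (t / u) := by
        simpa [abs_of_nonneg hratio] using abs_sub (Real.log t) (Real.log (t / u))
    _ ≤ |Real.log t| + (t / u) ^ ε / ε := by
        gcongr
        exact Real.log_le_rpow_div (div_nonneg (by linarith) hu.le) hε

theorem abs_rpow_sub_one_rpow_le {u t T h p ε : ℝ} (hu : 0 < u) (hut : u ≤ t) (htT : t ≤ T)
    (h0 : 0 ≤ h) (h1 : h ≤ 1) (hp : 1 ≤ p) (hε : 0 < ε) :
    |u ^ h - 1| ^ p ≤ h * max 1 T ^ p * (|Real.log t| + (t / u) ^ ε / ε) := by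
  have hmax : max 1 u ≤ max 1 T := max_le_max le_rfl (hut.trans htT)
  have hbound : |u ^ h - 1| ≤ max 1 u :=
    abs_sub_le_of_nonneg_of_le (Real.rpow_nonneg hu.le h) (rpow_le_max_one hu.le h0 h1)
      zero_le_one (le_max_left 1 u)
  have hmul : |u ^ h - 1| ≤ h * |Real.log u| * max 1 T :=
    (abs_rpow_sub_one_le_mul hu h0 h1).trans (by gcongr)
  calc |u ^ h - 1| ^ p ≤ h * |Real.log u| * max 1 T ^ p :=
        rpow_le_mul_rpow_of_le_mul (abs_nonneg _) (hbound.trans hmax) hmul hp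
    _ ≤ h * max 1 T ^ p * (|Real.log t| + (t / u) ^ ε / ε) := by
        rw [mul_right_comm]
        gcongr
        exact abs_log_le_abs_log_add_rpow_div hu hut hε

theorem rpow_sub_one_mul_div_rpow {x t a ε : ℝ} (hx : 0 < x) (ht : 0 ≤ t) :
    x ^ (a - 1) * (t / x) ^ ε = t ^ ε * x ^ (a - ε - 1) := by
  rw [Real.div_rpow ht hx.le, show a - ε - 1 = (a - 1) - ε by ring, Real.rpow_sub hx (a - 1) ε]
  ring

theorem intervalIntegral_mono_of_nonneg_Ioo {f g : ℝ → ℝ} {a b : ℝ} (hab : a ≤ b)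
    (hg : IntervalIntegrable g volume a b) (hf : ∀ x ∈ Ioo a b, 0 ≤ f x)
    (hfg : ∀ x ∈ Ioo a b, f x ≤ g x) :
    ∫ x in a..b, f x ≤ ∫ x in a..b, g x := by
  rw [integral_of_le hab, integral_of_le hab, integral_Ioc_eq_integral_Ioo,
    integral_Ioc_eq_integral_Ioo]
  exact integral_mono_of_nonneg (ae_restrict_of_forall_mem measurableSet_Ioo hf)
    (hg.1.mono_set Ioo_subset_Ioc_self) (ae_restrict_of_forall_mem measurableSet_Ioo hfg)

theorem beta_kernel_mul_abs_rpow_sub_one_le {a b s t T h p ε : ℝ} (hs : 0 < s) (hst : s < t)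
    (htT : t ≤ T) (h0 : 0 ≤ h) (h1 : h ≤ 1) (hp : 1 ≤ p) (hε : 0 < ε) :
    s ^ (a - 1) * (t - s) ^ (b - 1) * (|s ^ h - 1| ^ p + |(t - s) ^ h - 1| ^ p)
      ≤ h * max 1 T ^ p * (2 * |Real.log t| * (s ^ (a - 1) * (t - s) ^ (b - 1))
          + t ^ ε / ε * (s ^ (a - ε - 1) * (t - s) ^ (b - 1)
            + s ^ (a - 1) * (t - s) ^ (b - ε - 1))) := by
  have hts : 0 < t - s := sub_pos.2 hst
  have hshift₁ := rpow_sub_one_mul_div_rpow (a := a) (ε := ε) hs (hs.trans hst).le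
  have hshift₂ := rpow_sub_one_mul_div_rpow (a := b) (ε := ε) hts (hs.trans hst).le
  set K := h * max 1 T ^ p
  calc s ^ (a - 1) * (t - s) ^ (b - 1) * (|s ^ h - 1| ^ p + |(t - s) ^ h - 1| ^ p)
      ≤ s ^ (a - 1) * (t - s) ^ (b - 1) * (K * (|Real.log t| + (t / s) ^ ε / ε)
          + K * (|Real.log t| + (t / (t - s)) ^ ε / ε)) := by
        gcongr
        · exact abs_rpow_sub_one_rpow_le hs hst.le htT h0 h1 hp hε
        · exact abs_rpow_sub_one_rpow_le hts (by linarith) htT h0 h1 hp hε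
    _ = _ := by
        linear_combination (K / ε * (t - s) ^ (b - 1)) * hshift₁
          + (K / ε * s ^ (a - 1)) * hshift₂

theorem integral_beta_kernel_mul_abs_rpow_sub_one_le {a b t T h p ε : ℝ} (hε : 0 < ε)
    (ha : 2 * ε ≤ a) (hb : 2 * ε ≤ b) (ht : 0 < t) (htT : t ≤ T) (h0 : 0 ≤ h)
    (h1 : h ≤ 1) (hp : 1 ≤ p) :
    ∫ s in (0 : ℝ)..t,
        s ^ (a - 1) * (t - s) ^ (b - 1) * (|s ^ h - 1| ^ p + |(t - s) ^ h - 1| ^ p)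
      ≤ 2 * h * max 1 T ^ p * (∫ θ in (0 : ℝ)..1, θ ^ (ε - 1) * (1 - θ) ^ (ε - 1))
          * t ^ (a + b - 1) * (|Real.log t| + 1 / ε) := by
  set K := h * max 1 T ^ p
  set B := ∫ θ in (0 : ℝ)..1, θ ^ (ε - 1) * (1 - θ) ^ (ε - 1)
  set w : ℝ → ℝ → ℝ → ℝ := fun a b s => s ^ (a - 1) * (t - s) ^ (b - 1)
  have hint : ∀ a' b', ε ≤ a' → ε ≤ b' → IntervalIntegrable (w a' b') volume 0 t :=
    fun a' b' ha' hb' =>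
      intervalIntegrable_rpow_mul_rpow_sub (hε.trans_le ha') (hε.trans_le hb') ht
  have hle : ∀ a' b', ε ≤ a' → ε ≤ b' →
      ∫ s in (0 : ℝ)..t, w a' b' s ≤ t ^ (a' + b' - 1) * B :=
    fun a' b' ha' hb' => integral_rpow_mul_rpow_sub_le hε ha' hb' ht
  have hexp : t ^ ε * t ^ (a + b - 1 - ε) = t ^ (a + b - 1) := by
    rw [← Real.rpow_add ht, add_sub_cancel]
  have hint₀ := hint a b (by linarith) (by linarith)
  have hint₁ := hint (a - ε) b (by linarith) (by linarith)
  have hint₂ := hint a (b - ε) (by linarith) (by linarith)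
  calc _ ≤ ∫ s in (0 : ℝ)..t,
          K * (2 * |Real.log t| * w a b s + t ^ ε / ε * (w (a - ε) b s + w a (b - ε) s)) := by
        refine intervalIntegral_mono_of_nonneg_Ioo ht.le
          (((hint₀.const_mul _).add ((hint₁.add hint₂).const_mul _)).const_mul _)
          (fun s hs => ?_)
          (fun s hs => beta_kernel_mul_abs_rpow_sub_one_le hs.1 hs.2 htT h0 h1 hp hε)
        have hts : 0 ≤ t - s := by linarith [hs.2]
        exact mul_nonneg (mul_nonneg (Real.rpow_nonneg hs.1.le _) (Real.rpow_nonneg hts _))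
          (by positivity)
    _ = K * (2 * |Real.log t| * (∫ s in (0 : ℝ)..t, w a b s) + t ^ ε / ε *
          ((∫ s in (0 : ℝ)..t, w (a - ε) b s) + ∫ s in (0 : ℝ)..t, w a (b - ε) s)) := by
        rw [intervalIntegral.integral_const_mul,
          intervalIntegral.integral_add (hint₀.const_mul _) ((hint₁.add hint₂).const_mul _),
          intervalIntegral.integral_const_mul, intervalIntegral.integral_const_mul,
          intervalIntegral.integral_add hint₁ hint₂]
    _ ≤ K * (2 * |Real.log t| * (t ^ (a + b - 1) * B) + t ^ ε / ε *
          (t ^ (a - ε + b - 1) * B + t ^ (a + (b - ε) - 1) * B)) := by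
        gcongr <;> exact hle _ _ (by linarith) (by linarith)
    _ = 2 * h * max 1 T ^ p * B * t ^ (a + b - 1) * (|Real.log t| + 1 / ε) := by
        rw [show a - ε + b - 1 = a + b - 1 - ε by ring,
          show a + (b - ε) - 1 = a + b - 1 - ε by ring]
        linear_combination (2 * K * B / ε) * hexp

theorem le_one_add_rpow {y p : ℝ} (hy : 0 ≤ y) (hp : 1 ≤ p) : y ≤ 1 + y ^ p := by
  rcases le_total y 1 with hy1 | hy1
  · linarith [Real.rpow_nonneg hy p]
  · linarith [Real.self_le_rpow_of_one_le hy1 hp]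

theorem singular_integral_log_estimate_general (ν₀ ν₁ T p : ℝ)
    (h0 : 0 < ν₀) (hp : 1 ≤ p) :
    ∃ C : ℝ, ∀ η ν h : ℝ, η ∈ Set.Icc ν₀ ν₁ → ν ∈ Set.Icc ν₀ ν₁ → h ∈ Set.Icc (0:ℝ) 1 →
      ∀ t ∈ Set.Ioc (0:ℝ) T,
        (∫ s in (0:ℝ)..t, s ^ (η - 1) * (t - s) ^ (ν - 1) *
            (|s ^ h - 1| ^ p + |(t - s) ^ h - 1| ^ p))
          ≤ C * h * t ^ (η + ν - 1) * (1 + |Real.log t| ^ p) := by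
  set ε := ν₀ / 2 with hε_def
  have hε : 0 < ε := half_pos h0
  set B := ∫ θ in (0 : ℝ)..1, θ ^ (ε - 1) * (1 - θ) ^ (ε - 1)
  have hB : 0 ≤ B := intervalIntegral.integral_nonneg zero_le_one fun θ hθ =>
    mul_nonneg (Real.rpow_nonneg hθ.1 _) (Real.rpow_nonneg (by linarith [hθ.2]) _)
  refine ⟨2 * max 1 T ^ p * B * (1 + 1 / ε), ?_⟩
  rintro η ν h ⟨hη, -⟩ ⟨hν, -⟩ ⟨hh0, hh1⟩ t ⟨ht, htT⟩
  have hlog : |Real.log t| + 1 / ε ≤ (1 + 1 / ε) * (1 + |Real.log t| ^ p) := by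
    nlinarith [le_one_add_rpow (abs_nonneg (Real.log t)) hp,
      Real.rpow_nonneg (abs_nonneg (Real.log t)) p, one_div_pos.2 hε]
  calc _ ≤ 2 * h * max 1 T ^ p * B * t ^ (η + ν - 1) * (|Real.log t| + 1 / ε) :=
        integral_beta_kernel_mul_abs_rpow_sub_one_le hε (by linarith [hε_def])
          (by linarith [hε_def]) ht htT hh0 hh1 hp
    _ ≤ 2 * h * max 1 T ^ p * B * t ^ (η + ν - 1)
          * ((1 + 1 / ε) * (1 + |Real.log t| ^ p)) := by
        gcongr
    _ = _ := by ring

/-- Singular integral estimate: for `η, ν ∈ [ν₀,ν₁]`, `p ≥ 1`, `h ∈ [0,1]`,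
`∫₀ᵗ s^(η-1)(t-s)^(ν-1)(|s^h-1|^p + |(t-s)^h-1|^p) ds ≤ C h t^(η+ν-1)(1+|ln t|^p)`. -/
theorem singular_integral_log_estimate (ν₀ ν₁ T p : ℝ)
    (h0 : 0 < ν₀) (h01 : ν₀ ≤ ν₁) (hT : 0 < T) (hp : 1 ≤ p) :
    ∃ C : ℝ, ∀ η ν h : ℝ, η ∈ Set.Icc ν₀ ν₁ → ν ∈ Set.Icc ν₀ ν₁ → h ∈ Set.Icc (0:ℝ) 1 →
      ∀ t ∈ Set.Ioc (0:ℝ) T,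
        (∫ s in (0:ℝ)..t, s ^ (η - 1) * (t - s) ^ (ν - 1) *
            (|s ^ h - 1| ^ p + |(t - s) ^ h - 1| ^ p))
          ≤ C * h * t ^ (η + ν - 1) * (1 + |Real.log t| ^ p) :=
  singular_integral_log_estimate_general ν₀ ν₁ T p h0 hp
end

section
/- Let X be a Banach space, α₀ ∈ (0,1], α, α' ∈ [α₀, 1], 1 ≤ p ≤ ∞, and w ∈ L^p(0,T;X). Then there is a constant C = C(α₀, T) with ‖J^{α'} w − J^α w‖_{L^p(0,T;X)} ≤ C ‖w‖_{L^p(0,T;X)} |α' − α|. -/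
/-
With `k_β(τ) = τ ^ (β - 1) / Γ(β)`, the difference `J^{α'} w - J^α w` is the convolution of `w`
with `k_{α'} - k_α` on `(0, T)`. Since `1 / Γ` is smooth, the mean value theorem in `β` bounds
`|k_{α'}(τ) - k_α(τ)|` by a multiple of `τ ^ (β - 1) (1 + |log τ|) |α' - α|`, and
`τ ^ (α₀ / 2) |log τ|` is bounded on `(0, T]`, so `k_{α'} - k_α` is dominated by
`C τ ^ (α₀ / 2 - 1) |α' - α|`, an integrable function. Young's inequality `L¹ * Lᵖ → Lᵖ`, proved
by Schur's test for nonnegative kernels, concludes for every `p ∈ [1, ∞]`.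
-/

open MeasureTheory
open scoped ENNReal

/-- Riemann–Liouville fractional integral for vector valued functions. -/
noncomputable def fracIntV {E : Type*} [NormedAddCommGroup E] [NormedSpace ℝ E]
    (α : ℝ) (u : ℝ → E) (t : ℝ) : E :=
  (Real.Gamma α)⁻¹ • ∫ s in (0:ℝ)..t, (t - s) ^ (α - 1) • u s

open Set Real
open scoped NNReal

section Schur

variable {α β : Type*} [MeasurableSpace α] [MeasurableSpace β]

theorem rpow_lintegral_mul_le {ν : Measure β} {K f : β → ℝ≥0∞} (hK : AEMeasurable K ν)
    (hf : AEMeasurable f ν) {p : ℝ} (hp : 1 ≤ p) :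
    (∫⁻ s, K s * f s ∂ν) ^ p ≤ (∫⁻ s, K s ∂ν) ^ (p - 1) * ∫⁻ s, K s * f s ^ p ∂ν := by
  have hp0 : 0 < p := zero_lt_one.trans_le hp
  have hq : 0 ≤ 1 - 1 / p := sub_nonneg.2 ((div_le_one hp0).2 hp)
  have hsplit : ∀ s, K s * f s = K s ^ (1 - 1 / p) * (K s * f s ^ p) ^ (1 / p) := fun s => by
    rw [ENNReal.mul_rpow_of_nonneg _ _ (by positivity), ← ENNReal.rpow_mul,
      mul_one_div_cancel hp0.ne', ENNReal.rpow_one, ← mul_assoc,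
      ← ENNReal.rpow_add_of_nonneg _ _ hq (by positivity), sub_add_cancel, ENNReal.rpow_one]
  have holder : ∫⁻ s, K s * f s ∂ν ≤
      (∫⁻ s, K s ∂ν) ^ (1 - 1 / p) * (∫⁻ s, K s * f s ^ p ∂ν) ^ (1 / p) := by
    rw [lintegral_congr hsplit]
    exact ENNReal.lintegral_mul_norm_pow_le hK (hK.mul (hf.pow_const p)) hq (by positivity)
      (sub_add_cancel 1 (1 / p))
  calc (∫⁻ s, K s * f s ∂ν) ^ p
      ≤ ((∫⁻ s, K s ∂ν) ^ (1 - 1 / p) * (∫⁻ s, K s * f s ^ p ∂ν) ^ (1 / p)) ^ p := by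
        gcongr
    _ = (∫⁻ s, K s ∂ν) ^ (p - 1) * ∫⁻ s, K s * f s ^ p ∂ν := by
        rw [ENNReal.mul_rpow_of_nonneg _ _ hp0.le, ← ENNReal.rpow_mul, ← ENNReal.rpow_mul,
          one_div_mul_cancel hp0.ne', ENNReal.rpow_one, sub_mul, one_mul,
          one_div_mul_cancel hp0.ne']

variable {μ : Measure α} {ν : Measure β} [SFinite μ] [SFinite ν] {K : α → β → ℝ≥0∞}
  {A : ℝ≥0∞}

theorem lintegral_rpow_lintegral_mul_le (hK : Measurable (Function.uncurry K))
    (hrow : ∀ᵐ t ∂μ, ∫⁻ s, K t s ∂ν ≤ A) (hcol : ∀ s, ∫⁻ t, K t s ∂μ ≤ A)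
    {f : β → ℝ≥0∞} (hf : Measurable f) {p : ℝ} (hp : 1 ≤ p) :
    ∫⁻ t, (∫⁻ s, K t s * f s ∂ν) ^ p ∂μ ≤ A ^ p * ∫⁻ s, f s ^ p ∂ν := by
  have hKf : Measurable fun x : α × β => K x.1 x.2 * f x.2 ^ p :=
    hK.mul ((hf.pow_const p).comp measurable_snd)
  calc ∫⁻ t, (∫⁻ s, K t s * f s ∂ν) ^ p ∂μ
      ≤ ∫⁻ t, A ^ (p - 1) * ∫⁻ s, K t s * f s ^ p ∂ν ∂μ := by
        refine lintegral_mono_ae (hrow.mono fun t ht => ?_)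
        refine (rpow_lintegral_mul_le hK.of_uncurry_left.aemeasurable
          hf.aemeasurable hp).trans ?_
        gcongr
    _ = A ^ (p - 1) * ∫⁻ s, ∫⁻ t, K t s * f s ^ p ∂μ ∂ν := by
        rw [lintegral_const_mul _ hKf.lintegral_prod_right',
          lintegral_lintegral_swap hKf.aemeasurable]
    _ ≤ A ^ (p - 1) * ∫⁻ s, A * f s ^ p ∂ν := by
        gcongr with s
        rw [lintegral_mul_const _ hK.of_uncurry_right]
        exact mul_le_mul_left (hcol s) _
    _ = A ^ p * ∫⁻ s, f s ^ p ∂ν := by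
        rw [lintegral_const_mul _ (hf.pow_const p), ← mul_assoc]
        nth_rw 2 [← ENNReal.rpow_one A]
        rw [← ENNReal.rpow_add_of_nonneg _ _ (by linarith) zero_le_one, sub_add_cancel]

theorem eLpNorm_lintegral_mul_le (hK : Measurable (Function.uncurry K))
    (hrow : ∀ᵐ t ∂μ, ∫⁻ s, K t s ∂ν ≤ A) (hcol : ∀ s, ∫⁻ t, K t s ∂μ ≤ A)
    {f : β → ℝ≥0∞} (hf : AEMeasurable f ν) {p : ℝ≥0∞} (hp : 1 ≤ p) :
    eLpNorm (fun t => ∫⁻ s, K t s * f s ∂ν) p μ ≤ A * eLpNorm f p ν := by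
  have hmk : ∀ t, ∫⁻ s, K t s * f s ∂ν = ∫⁻ s, K t s * hf.mk f s ∂ν := fun t =>
    lintegral_congr_ae (hf.ae_eq_mk.mono fun s hs => congrArg (K t s * ·) hs)
  simp_rw [hmk, eLpNorm_congr_ae hf.ae_eq_mk]
  rcases eq_or_ne p ⊤ with rfl | hp_top
  · simp only [eLpNorm_exponent_top]
    refine eLpNormEssSup_le_of_ae_enorm_bound (hrow.mono fun t ht => ?_)
    calc ‖∫⁻ s, K t s * hf.mk f s ∂ν‖ₑ
        ≤ ∫⁻ s, K t s * eLpNormEssSup (hf.mk f) ν ∂ν :=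
          lintegral_mono_ae ((enorm_ae_le_eLpNormEssSup _ ν).mono fun s hs => by
            gcongr; exact (enorm_eq_self _).symm.le.trans hs)
      _ ≤ A * eLpNormEssSup (hf.mk f) ν := by
          rw [lintegral_mul_const _ hK.of_uncurry_left]
          gcongr
  · have hp0 : p ≠ 0 := (zero_lt_one.trans_le hp).ne'
    have hp1 : 1 ≤ p.toReal := by simpa using ENNReal.toReal_mono hp_top hp
    simp only [eLpNorm_eq_lintegral_rpow_enorm_toReal hp0 hp_top, enorm_eq_self]
    calc (∫⁻ t, (∫⁻ s, K t s * hf.mk f s ∂ν) ^ p.toReal ∂μ) ^ (1 / p.toReal)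
        ≤ (A ^ p.toReal * ∫⁻ s, hf.mk f s ^ p.toReal ∂ν) ^ (1 / p.toReal) := by
          gcongr
          exact lintegral_rpow_lintegral_mul_le hK hrow hcol hf.measurable_mk hp1
      _ = A * (∫⁻ s, hf.mk f s ^ p.toReal ∂ν) ^ (1 / p.toReal) := by
          rw [ENNReal.mul_rpow_of_nonneg _ _ (by positivity), ← ENNReal.rpow_mul,
            mul_one_div_cancel (by positivity), ENNReal.rpow_one]

end Schur

theorem eLpNorm_setLIntegral_sub_mul_le {G : Type*} [AddGroup G] [MeasurableSpace G]
    [MeasurableAdd G] [MeasurableNeg G] [MeasurableSub₂ G] {μ : Measure G} [SFinite μ]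
    [μ.IsAddLeftInvariant] [μ.IsAddRightInvariant] [μ.IsNegInvariant] (S : Set G)
    {g : G → ℝ≥0∞} (hg : Measurable g) {f : G → ℝ≥0∞} (hf : AEMeasurable f (μ.restrict S))
    {p : ℝ≥0∞} (hp : 1 ≤ p) :
    eLpNorm (fun t => ∫⁻ s in S, g (t - s) * f s ∂μ) p (μ.restrict S) ≤
      (∫⁻ x, g x ∂μ) * eLpNorm f p (μ.restrict S) :=
  eLpNorm_lintegral_mul_le (K := fun t s => g (t - s)) (hg.comp measurable_sub)
    (ae_of_all _ fun t =>
      (setLIntegral_le_lintegral _ _).trans_eq (lintegral_sub_left_eq_self g t))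
    (fun s => (setLIntegral_le_lintegral _ _).trans_eq (lintegral_sub_right_eq_self g s))
    hf hp

theorem enorm_integral_smul_sub_integral_smul_le {α E : Type*} [MeasurableSpace α]
    [NormedAddCommGroup E] [NormedSpace ℝ E] {μ : Measure α} {k₁ k₂ : α → ℝ}
    (hk₁ : AEStronglyMeasurable k₁ μ) (hk₂ : AEStronglyMeasurable k₂ μ) {w : α → E}
    (hw : AEStronglyMeasurable w μ) {g : α → ℝ≥0∞} {c : ℝ≥0}
    (h₁ : ∀ᵐ s ∂μ, ‖k₁ s‖ₑ ≤ g s) (h₂ : ∀ᵐ s ∂μ, ‖k₂ s‖ₑ ≤ g s)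
    (h : ∀ᵐ s ∂μ, ‖k₁ s - k₂ s‖ₑ ≤ c * g s) :
    ‖∫ s, k₁ s • w s ∂μ - ∫ s, k₂ s • w s ∂μ‖ₑ ≤ c * ∫⁻ s, g s * ‖w s‖ₑ ∂μ := by
  -- The Bochner integrals are junk when `∫⁻ g ‖w‖ₑ = ∞`; the bound is then trivial
  -- unless `c = 0`, where `k₁ = k₂` a.e.
  rcases eq_or_ne c 0 with rfl | hc
  · have heq : ∀ᵐ s ∂μ, k₁ s • w s = k₂ s • w s := h.mono fun s hs => by
      have hzero : ‖k₁ s - k₂ s‖ₑ = 0 := by simpa using hs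
      rw [sub_eq_zero.1 (enorm_eq_zero.1 hzero)]
    rw [integral_congr_ae heq, sub_self, enorm_zero]
    exact zero_le
  by_cases hfin : ∫⁻ s, g s * ‖w s‖ₑ ∂μ = ⊤
  · rw [hfin, ENNReal.mul_top (ENNReal.coe_ne_zero.2 hc)]
    exact le_top
  have hint : ∀ k : α → ℝ, AEStronglyMeasurable k μ → (∀ᵐ s ∂μ, ‖k s‖ₑ ≤ g s) →
      Integrable (fun s => k s • w s) μ := fun k hk hkg =>
    ⟨hk.smul hw, (lintegral_mono_ae (hkg.mono fun s hs => by rw [enorm_smul]; gcongr)).trans_lt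
      (lt_top_iff_ne_top.2 hfin)⟩
  rw [← integral_sub (hint k₁ hk₁ h₁) (hint k₂ hk₂ h₂)]
  calc ‖∫ s, (k₁ s • w s - k₂ s • w s) ∂μ‖ₑ
        ≤ ∫⁻ s, ‖k₁ s • w s - k₂ s • w s‖ₑ ∂μ := enorm_integral_le_lintegral_enorm _
    _ ≤ ∫⁻ s, c * (g s * ‖w s‖ₑ) ∂μ := lintegral_mono_ae (h.mono fun s hs => by
        rw [← sub_smul, enorm_smul, ← mul_assoc]; gcongr)
    _ = c * ∫⁻ s, g s * ‖w s‖ₑ ∂μ := lintegral_const_mul' _ _ ENNReal.coe_ne_top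

theorem contDiff_inv_Gamma {n : WithTop ℕ∞} : ContDiff ℝ n fun x : ℝ => (Real.Gamma x)⁻¹ := by
  have h := (Complex.differentiable_one_div_Gamma.contDiff (n := n)).real_of_complex
  have heq : (fun x : ℝ => ((Complex.Gamma x)⁻¹).re) = fun x : ℝ => (Real.Gamma x)⁻¹ := by
    ext x; rw [Complex.Gamma_ofReal, ← Complex.ofReal_inv, Complex.ofReal_re]
  rwa [heq] at h

theorem rpow_mul_abs_log_le {τ ε : ℝ} (hτ : 0 < τ) (hε : 0 < ε) :
    τ ^ ε * |log τ| ≤ (τ ^ (2 * ε) + 1) / ε := by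
  have hle : log τ ≤ τ ^ ε / ε := log_le_rpow_div hτ.le hε
  have hge : -log τ ≤ τ ^ (-ε) / ε := by
    simpa [log_inv, inv_rpow hτ.le, ← rpow_neg hτ.le] using
      log_le_rpow_div (inv_nonneg.2 hτ.le) hε
  have habs : |log τ| ≤ (τ ^ ε + τ ^ (-ε)) / ε := by
    rw [add_div]
    exact abs_le'.2 ⟨hle.trans (le_add_of_nonneg_right (by positivity)),
      hge.trans (le_add_of_nonneg_left (by positivity))⟩
  calc τ ^ ε * |log τ| ≤ τ ^ ε * ((τ ^ ε + τ ^ (-ε)) / ε) := by gcongr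
    _ = (τ ^ (2 * ε) + 1) / ε := by
        rw [mul_div_assoc', mul_add, ← rpow_add hτ, ← rpow_add hτ, add_neg_cancel, rpow_zero,
          ← two_mul]

theorem rpow_mul_one_add_abs_log_le {τ T ε : ℝ} (hτ : τ ∈ Ioc 0 T) (hε : 0 < ε) :
    τ ^ ε * (1 + |log τ|) ≤ T ^ ε + (T ^ (2 * ε) + 1) / ε := by
  have hlog := rpow_mul_abs_log_le hτ.1 hε
  have hT : τ ^ ε ≤ T ^ ε := rpow_le_rpow hτ.1.le hτ.2 hε.le
  have hT2 : τ ^ (2 * ε) ≤ T ^ (2 * ε) := rpow_le_rpow hτ.1.le hτ.2 (by positivity)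
  have : (τ ^ (2 * ε) + 1) / ε ≤ (T ^ (2 * ε) + 1) / ε := by gcongr
  linarith [mul_add (τ ^ ε) 1 |log τ|]

theorem exists_rpow_sub_one_mul_one_add_abs_log_le {α₀ : ℝ} (hα₀ : 0 < α₀) (T : ℝ) :
    ∃ C, ∀ β ∈ Icc α₀ 1, ∀ τ ∈ Ioc 0 T,
      τ ^ (β - 1) * (1 + |log τ|) ≤ C * τ ^ (α₀ / 2 - 1) := by
  set R := max 1 T
  refine ⟨R * (T ^ (α₀ / 2) + (T ^ (2 * (α₀ / 2)) + 1) / (α₀ / 2)), fun β hβ τ hτ => ?_⟩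
  have hR : τ ^ (β - α₀) ≤ R :=
    calc τ ^ (β - α₀) ≤ R ^ (β - α₀) :=
          rpow_le_rpow hτ.1.le (hτ.2.trans (le_max_right 1 T)) (by linarith [hβ.1])
      _ ≤ R ^ (1 : ℝ) := rpow_le_rpow_of_exponent_le (le_max_left 1 T) (by linarith [hβ.2])
      _ = R := rpow_one R
  have hsplit : τ ^ (β - 1) = τ ^ (α₀ / 2 - 1) * τ ^ (β - α₀) * τ ^ (α₀ / 2) := by
    rw [← rpow_add hτ.1, ← rpow_add hτ.1]; ring_nf
  have hlog := rpow_mul_one_add_abs_log_le hτ (half_pos hα₀)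
  calc τ ^ (β - 1) * (1 + |log τ|)
      = τ ^ (α₀ / 2 - 1) * (τ ^ (β - α₀) * (τ ^ (α₀ / 2) * (1 + |log τ|))) := by
        rw [hsplit]; ring
    _ ≤ τ ^ (α₀ / 2 - 1) * (R * (T ^ (α₀ / 2) + (T ^ (2 * (α₀ / 2)) + 1) / (α₀ / 2))) := by
        have := hτ.1
        gcongr
    _ = _ := mul_comm _ _

noncomputable def fracKernel (β τ : ℝ) : ℝ := (Gamma β)⁻¹ * τ ^ (β - 1)

theorem measurable_fracKernel (β : ℝ) : Measurable (fracKernel β) :=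
  (measurable_id.pow_const _).const_mul _

theorem fracIntV_eq_setIntegral_Ioo {E : Type*} [NormedAddCommGroup E] [NormedSpace ℝ E]
    (β : ℝ) (u : ℝ → E) {t : ℝ} (ht : 0 ≤ t) :
    fracIntV β u t = ∫ s in Ioo 0 t, fracKernel β (t - s) • u s := by
  rw [fracIntV, intervalIntegral.integral_of_le ht, integral_Ioc_eq_integral_Ioo,
    ← integral_smul]
  simp_rw [smul_smul, fracKernel]

theorem hasDerivAt_fracKernel {τ : ℝ} (hτ : 0 < τ) (β : ℝ) :
    HasDerivAt (fun β => fracKernel β τ)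
      (deriv (fun x => (Gamma x)⁻¹) β * τ ^ (β - 1) + (Gamma β)⁻¹ * (τ ^ (β - 1) * log τ))
      β := by
  have hpow : HasDerivAt (fun β : ℝ => τ ^ (β - 1)) (τ ^ (β - 1) * log τ) β := by
    simpa [mul_comm] using ((hasDerivAt_id' β).sub_const 1).const_rpow hτ
  exact ((contDiff_inv_Gamma (n := 1)).differentiable one_ne_zero β).hasDerivAt.mul hpow

theorem exists_fracKernel_bounds {α₀ : ℝ} (hα₀ : 0 < α₀) (T : ℝ) :
    ∃ C, ∀ τ ∈ Ioc 0 T, (∀ β ∈ Icc α₀ 1, |fracKernel β τ| ≤ C * τ ^ (α₀ / 2 - 1)) ∧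
      ∀ α ∈ Icc α₀ 1, ∀ α' ∈ Icc α₀ 1,
        |fracKernel α' τ - fracKernel α τ| ≤ C * τ ^ (α₀ / 2 - 1) * |α' - α| := by
  set φ : ℝ → ℝ := fun x => (Gamma x)⁻¹
  have hφ : ContDiff ℝ 1 φ := contDiff_inv_Gamma
  obtain ⟨B, hB⟩ := (isCompact_Icc (a := α₀) (b := 1)).bddAbove_image
    (f := fun x => |deriv φ x| + |φ x|)
    ((hφ.continuous_deriv le_rfl).abs.add hφ.continuous.abs).continuousOn
  obtain ⟨C₁, hC₁⟩ := exists_rpow_sub_one_mul_one_add_abs_log_le hα₀ T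
  refine ⟨B * C₁, fun τ hτ => ?_⟩
  have hL : 0 ≤ |log τ| := abs_nonneg _
  have hX : ∀ β : ℝ, 0 < τ ^ (β - 1) := fun β => rpow_pos_of_pos hτ.1 _
  have hdom : ∀ β ∈ Icc α₀ 1,
      (|deriv φ β| + |φ β|) * (τ ^ (β - 1) * (1 + |log τ|)) ≤ B * C₁ * τ ^ (α₀ / 2 - 1) :=
    fun β hβ => by
      have hBβ : |deriv φ β| + |φ β| ≤ B := hB (mem_image_of_mem _ hβ)
      rw [mul_assoc]
      exact mul_le_mul hBβ (hC₁ β hβ τ hτ) (by have := hX β; positivity)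
        ((by positivity : (0 : ℝ) ≤ |deriv φ β| + |φ β|).trans hBβ)
  refine ⟨fun β hβ => (hdom β hβ).trans' ?_, fun α hα α' hα' => ?_⟩
  · have := hX β
    change |φ β * τ ^ (β - 1)| ≤ _
    rw [abs_mul, abs_of_pos this]
    nlinarith [mul_nonneg (mul_nonneg (abs_nonneg (deriv φ β)) this.le)
      (by positivity : 0 ≤ 1 + |log τ|), mul_nonneg (mul_nonneg (abs_nonneg (φ β)) this.le) hL]
  · have hmvt := Convex.norm_image_sub_le_of_norm_hasDerivWithin_le
      (C := B * C₁ * τ ^ (α₀ / 2 - 1))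
      (fun β _ => (hasDerivAt_fracKernel hτ.1 β).hasDerivWithinAt) (fun β hβ => ?_)
      (convex_Icc α₀ 1) hα hα'
    · simpa only [Real.norm_eq_abs] using hmvt
    refine (hdom β hβ).trans' ?_
    have := hX β
    rw [Real.norm_eq_abs]
    refine (abs_add_le _ _).trans ?_
    rw [abs_mul, abs_mul, abs_mul, abs_of_pos this]
    nlinarith [mul_nonneg (mul_nonneg (abs_nonneg (deriv φ β)) this.le) hL,
      mul_nonneg (abs_nonneg (φ β)) this.le]

theorem exists_fracKernel_enorm_le {α₀ : ℝ} (hα₀ : 0 < α₀) (T : ℝ) :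
    ∃ g : ℝ → ℝ≥0∞, Measurable g ∧ ∫⁻ τ, g τ ≠ ⊤ ∧ ∀ τ ∈ Ioc 0 T,
      (∀ β ∈ Icc α₀ 1, ‖fracKernel β τ‖ₑ ≤ g τ) ∧
      ∀ α ∈ Icc α₀ 1, ∀ α' ∈ Icc α₀ 1,
        ‖fracKernel α' τ - fracKernel α τ‖ₑ ≤ ‖α' - α‖₊ * g τ := by
  obtain ⟨C, hC⟩ := exists_fracKernel_bounds hα₀ T
  set H : ℝ → ℝ := fun τ => C * τ ^ (α₀ / 2 - 1)
  have hH : IntegrableOn H (Ioc 0 T) :=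
    ((intervalIntegral.intervalIntegrable_rpow' (by linarith)).const_mul C).1
  refine ⟨(Ioc 0 T).indicator fun τ => ENNReal.ofReal (H τ),
    (((measurable_id.pow_const _).const_mul C).ennreal_ofReal).indicator measurableSet_Ioc,
    ?_, fun τ hτ => ?_⟩
  · rw [lintegral_indicator measurableSet_Ioc]
    exact hH.lintegral_lt_top.ne
  obtain ⟨hβ, hdiff⟩ := hC τ hτ
  rw [indicator_of_mem hτ]
  refine ⟨fun β hb => ?_, fun α ha α' ha' => ?_⟩
  · rw [Real.enorm_eq_ofReal_abs]
    exact ENNReal.ofReal_le_ofReal (hβ β hb)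
  · rw [← enorm_eq_nnnorm, Real.enorm_eq_ofReal_abs, Real.enorm_eq_ofReal_abs,
      ← ENNReal.ofReal_mul (abs_nonneg _), mul_comm]
    exact ENNReal.ofReal_le_ofReal (hdiff α ha α' ha')

theorem enorm_fracIntV_sub_le {X : Type*} [NormedAddCommGroup X] [NormedSpace ℝ X]
    {g : ℝ → ℝ≥0∞} {c : ℝ≥0} {α α' T t : ℝ}
    (hα : ∀ τ ∈ Ioc 0 T, ‖fracKernel α τ‖ₑ ≤ g τ)
    (hα' : ∀ τ ∈ Ioc 0 T, ‖fracKernel α' τ‖ₑ ≤ g τ)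
    (hdiff : ∀ τ ∈ Ioc 0 T, ‖fracKernel α' τ - fracKernel α τ‖ₑ ≤ c * g τ)
    {w : ℝ → X} (hw : AEStronglyMeasurable w (volume.restrict (Ioc 0 T)))
    (ht : t ∈ Ioc 0 T) :
    ‖fracIntV α' w t - fracIntV α w t‖ₑ ≤ c * ∫⁻ s in Ioc 0 T, g (t - s) * ‖w s‖ₑ := by
  have hsub : Ioo 0 t ⊆ Ioc 0 T := fun s hs => ⟨hs.1, hs.2.le.trans ht.2⟩
  have hτ : ∀ᵐ s ∂(volume.restrict (Ioo 0 t)), t - s ∈ Ioc 0 T :=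
    ae_restrict_of_forall_mem measurableSet_Ioo fun s hs =>
      ⟨by linarith [hs.2], by linarith [hs.1, ht.2]⟩
  have hk : ∀ β, AEStronglyMeasurable (fun s => fracKernel β (t - s))
      (volume.restrict (Ioo 0 t)) := fun β =>
    ((measurable_fracKernel β).comp (measurable_const.sub measurable_id)).aestronglyMeasurable
  rw [fracIntV_eq_setIntegral_Ioo α' w ht.1.le, fracIntV_eq_setIntegral_Ioo α w ht.1.le]
  refine (enorm_integral_smul_sub_integral_smul_le (hk α') (hk α)
    (hw.mono_measure (Measure.restrict_mono hsub le_rfl)) (hτ.mono fun s hs => hα' _ hs)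
    (hτ.mono fun s hs => hα _ hs) (hτ.mono fun s hs => hdiff _ hs)).trans ?_
  gcongr

theorem fracInt_lipschitz_in_order_general {X : Type*} [NormedAddCommGroup X] [NormedSpace ℝ X]
    (T α₀ : ℝ) (hα₀0 : 0 < α₀) :
    ∃ C : ℝ, ∀ α α' : ℝ, α ∈ Set.Icc α₀ 1 → α' ∈ Set.Icc α₀ 1 →
      ∀ p : ℝ≥0∞, 1 ≤ p → ∀ w : ℝ → X, MemLp w p (volume.restrict (Set.Ioc 0 T)) →
        eLpNorm (fun t => fracIntV α' w t - fracIntV α w t) p (volume.restrict (Set.Ioc 0 T)) ≤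
          ENNReal.ofReal (C * |α' - α|) * eLpNorm w p (volume.restrict (Set.Ioc 0 T)) := by
  obtain ⟨g, hg, hg_fin, hk⟩ := exists_fracKernel_enorm_le hα₀0 T
  refine ⟨(∫⁻ τ, g τ).toReal, fun α α' hα hα' p hp w hw => ?_⟩
  set μT := volume.restrict (Ioc 0 T)
  set Φ : ℝ → ℝ≥0∞ := fun t => ∫⁻ s in Ioc 0 T, g (t - s) * ‖w s‖ₑ
  have hpt : ∀ᵐ t ∂μT,
      ‖fracIntV α' w t - fracIntV α w t‖ₑ ≤ ‖α' - α‖₊ * ‖Φ t‖ₑ :=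
    ae_restrict_of_forall_mem measurableSet_Ioc fun t ht =>
      enorm_fracIntV_sub_le (fun τ hτ => (hk τ hτ).1 α hα) (fun τ hτ => (hk τ hτ).1 α' hα')
        (fun τ hτ => (hk τ hτ).2 α hα α' hα') hw.1 ht
  calc _ ≤ ‖α' - α‖₊ • eLpNorm Φ p μT := eLpNorm_le_nnreal_smul_eLpNorm_of_ae_le_mul' hpt p
    _ ≤ ‖α' - α‖₊ • ((∫⁻ τ, g τ) * eLpNorm w p μT) := by
        gcongr
        simpa only [eLpNorm_enorm] using
          eLpNorm_setLIntegral_sub_mul_le (Ioc 0 T) hg hw.1.enorm hp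
    _ = ENNReal.ofReal ((∫⁻ τ, g τ).toReal * |α' - α|) * eLpNorm w p μT := by
        rw [ENNReal.smul_def, smul_eq_mul, ENNReal.ofReal_mul ENNReal.toReal_nonneg,
          ENNReal.ofReal_toReal hg_fin, ← Real.enorm_eq_ofReal_abs, enorm_eq_nnnorm]
        ring

/-- Lipschitz dependence of the fractional integral on the order:
`‖J^{α'} w − J^α w‖_{L^p} ≤ C ‖w‖_{L^p} |α' − α|` uniformly for `α, α' ∈ [α₀,1]`. -/
theorem fracInt_lipschitz_in_order {X : Type*} [NormedAddCommGroup X] [NormedSpace ℝ X]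
    [CompleteSpace X] (T α₀ : ℝ) (hT : 0 < T) (hα₀0 : 0 < α₀) (hα₀1 : α₀ ≤ 1) :
    ∃ C : ℝ, ∀ α α' : ℝ, α ∈ Set.Icc α₀ 1 → α' ∈ Set.Icc α₀ 1 →
      ∀ p : ℝ≥0∞, 1 ≤ p → ∀ w : ℝ → X, MemLp w p (volume.restrict (Set.Ioc 0 T)) →
        eLpNorm (fun t => fracIntV α' w t - fracIntV α w t) p (volume.restrict (Set.Ioc 0 T)) ≤
          ENNReal.ofReal (C * |α' - α|) * eLpNorm w p (volume.restrict (Set.Ioc 0 T)) :=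
  fracInt_lipschitz_in_order_general T α₀ hα₀0
end

section
/- Suppose K_β : X → Y are bounded linear operators with ‖K_β − K_{β₀}‖ → 0 as β → β₀, and the family (K_β) has a β₀-unstable inverse at x₀ (there exist β_n → β₀ and x_n with K_{β_n} x_n → K_{β₀} x₀ but x_n ↛ x₀). Then K_{β₀} itself has an unstable inverse at x₀: there is a sequence (u_n) ⊂ X with K_{β₀} u_n → K_{β₀} x₀ in Y but u_n ↛ x₀ in X. -/
/-! Either `K β₀` is bounded below, i.e. antilipschitz, or it is not. Being bounded below survives
small operator-norm perturbations uniformly, so in the first case `K (βs n) (xs n) → K β₀ x₀`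
forces `xs n → x₀`, contradicting the hypothesis. In the second case there are unit vectors `w n`
with `K β₀ (w n) → 0`, and `x₀ + w n` is an unstable sequence. -/

open Filter Topology NNReal

def ContinuousLinearMap.HasUnstableInverseAt {𝕜 E F : Type*} [NontriviallyNormedField 𝕜]
    [SeminormedAddCommGroup E] [NormedSpace 𝕜 E] [SeminormedAddCommGroup F] [NormedSpace 𝕜 F]
    (T : E →L[𝕜] F) (x₀ : E) : Prop :=
  ∃ u : ℕ → E, Tendsto (fun n => T (u n)) atTop (𝓝 (T x₀)) ∧ ¬ Tendsto u atTop (𝓝 x₀)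

namespace ContinuousLinearMap

theorem tendsto_of_antilipschitzWith_of_tendsto_perturbed_apply
    {𝕜 E F ι : Type*} [NontriviallyNormedField 𝕜]
    [SeminormedAddCommGroup E] [NormedSpace 𝕜 E] [SeminormedAddCommGroup F] [NormedSpace 𝕜 F]
    {l : Filter ι} {S : E →L[𝕜] F} {T : ι → E →L[𝕜] F} {x : ι → E} {x₀ : E} {C : ℝ≥0}
    (hS : AntilipschitzWith C S) (hT : Tendsto (fun i => ‖T i - S‖) l (𝓝 0))
    (hx : Tendsto (fun i => T i (x i)) l (𝓝 (S x₀))) :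
    Tendsto x l (𝓝 x₀) := by
  rw [tendsto_iff_norm_sub_tendsto_zero] at hx ⊢
  have hsmall : ∀ᶠ i in l, C * ‖T i - S‖ ≤ 1 / 2 :=
    (by simpa using hT.const_mul (C : ℝ) : Tendsto (fun i => C * ‖T i - S‖) l (𝓝 0)).eventually
      (ge_mem_nhds one_half_pos)
  have hbound : ∀ᶠ i in l,
      ‖x i - x₀‖ ≤ 2 * C * (‖T i - S‖ * ‖x₀‖ + ‖T i (x i) - S x₀‖) := by
    filter_upwards [hsmall] with i hi
    have hsplit : S (x i - x₀) = (S - T i) (x i) + (T i (x i) - S x₀) := by simp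
    have hle : ‖x i - x₀‖ ≤ C * (‖T i - S‖ * (‖x i - x₀‖ + ‖x₀‖) + ‖T i (x i) - S x₀‖) := calc
      ‖x i - x₀‖ ≤ C * ‖S (x i - x₀)‖ := S.bound_of_antilipschitz hS _
      _ ≤ C * (‖T i - S‖ * ‖x i‖ + ‖T i (x i) - S x₀‖) := by
        rw [hsplit, norm_sub_rev (T i) S]
        gcongr
        exact (norm_add_le _ _).trans (add_le_add_left ((S - T i).le_opNorm _) _)
      _ ≤ C * (‖T i - S‖ * (‖x i - x₀‖ + ‖x₀‖) + ‖T i (x i) - S x₀‖) := by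
        gcongr
        simpa using norm_add_le (x i - x₀) x₀
    -- `hi` lets the term `C * ‖T i - S‖ * ‖x i - x₀‖` be absorbed into the left-hand side.
    nlinarith [C.2, norm_nonneg (x i - x₀)]
  refine squeeze_zero' (Eventually.of_forall fun i => norm_nonneg _) hbound ?_
  simpa using (hT.mul_const ‖x₀‖ |>.add hx).const_mul (2 * C : ℝ)

theorem hasUnstableInverseAt_of_not_antilipschitzWith {𝕜 E F : Type*} [RCLike 𝕜]
    [NormedAddCommGroup E] [NormedSpace 𝕜 E] [SeminormedAddCommGroup F] [NormedSpace 𝕜 F]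
    {T : E →L[𝕜] F} (hT : ∀ C, ¬ AntilipschitzWith C T) (x₀ : E) :
    T.HasUnstableInverseAt x₀ := by
  have hv : ∀ n : ℕ, ∃ v, (n + 1) * ‖T v‖ < ‖v‖ := fun n => by
    by_contra! h
    exact hT (n + 1) (T.antilipschitz_of_bound fun v => by exact_mod_cast h v)
  choose v hv using hv
  have hv₀ : ∀ n, v n ≠ 0 := fun n h => by simpa [h] using hv n
  set w : ℕ → E := fun n => (‖v n‖⁻¹ : 𝕜) • v n
  have hw : ∀ n, ‖w n‖ = 1 := fun n => norm_smul_inv_norm (hv₀ n)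
  have hTw : ∀ n, ‖T (w n)‖ ≤ 1 / (n + 1) := fun n => by
    have := norm_pos_iff.2 (hv₀ n)
    simp only [w, map_smul, norm_smul, norm_inv, RCLike.norm_ofReal, abs_norm]
    rw [inv_mul_le_iff₀ this, mul_one_div, le_div_iff₀ (by positivity)]
    linarith [hv n]
  refine ⟨fun n => x₀ + w n, ?_, fun h => ?_⟩
  · have : Tendsto (fun n => T (w n)) atTop (𝓝 0) :=
      squeeze_zero_norm hTw tendsto_one_div_add_atTop_nhds_zero_nat
    simpa using this.const_add (T x₀)
  · rw [tendsto_iff_norm_sub_tendsto_zero] at h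
    simp [hw] at h

end ContinuousLinearMap

/-- If the bounded linear operators `K_β` converge to `K_{β₀}` in operator norm and the
family `(K_β)` has a `β₀`-unstable inverse at `x₀`, then `K_{β₀}` itself has an unstable
inverse at `x₀`. -/
theorem operator_norm_limit_unstable_inverse {X Y : Type*}
    [NormedAddCommGroup X] [NormedSpace ℝ X] [NormedAddCommGroup Y] [NormedSpace ℝ Y]
    (β₀ : ℝ) (K : ℝ → X →L[ℝ] Y) (x₀ : X)
    (hconv : Tendsto (fun β => ‖K β - K β₀‖) (nhds β₀) (nhds 0))
    (hunst : ∃ (βs : ℕ → ℝ) (xs : ℕ → X),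
      Tendsto βs atTop (nhds β₀) ∧
      Tendsto (fun n => K (βs n) (xs n)) atTop (nhds (K β₀ x₀)) ∧
      ¬ Tendsto xs atTop (nhds x₀)) :
    ∃ u : ℕ → X,
      Tendsto (fun n => K β₀ (u n)) atTop (nhds (K β₀ x₀)) ∧
      ¬ Tendsto u atTop (nhds x₀) := by
  obtain ⟨βs, xs, hβ, hKx, hx⟩ := hunst
  by_cases hanti : ∃ C, AntilipschitzWith C (K β₀)
  · obtain ⟨C, hC⟩ := hanti
    exact absurd ((K β₀).tendsto_of_antilipschitzWith_of_tendsto_perturbed_apply hC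
      (hconv.comp hβ) hKx) hx
  · exact (K β₀).hasUnstableInverseAt_of_not_antilipschitzWith (not_exists.1 hanti) x₀
end
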